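/- Let G be a graph that is vertex-critical with respect to the property χ(G) > Δ₂(G) + 3. Then no vertex of G dominates another: there are no distinct vertices x, y with N(y) ⊆ N[x]. -/
import Mathlib


open SimpleGraph

variable {V : Type*}

/-- The codegree of two vertices: the number of their common neighbors. -/
noncomputable def codeg (H : SimpleGraph V) (u v : V) : ℕ :=
  Nat.card {x : V // H.Adj u x ∧ H.Adj v x}

/-- The maximum codegree `Δ₂`: the maximum of `codeg` over pairs of distinct vertices. -/
noncomputable def maxCodeg (H : SimpleGraph V) : ℕ :=
  sSup {n | ∃ u v : V, u ≠ v ∧ codeg H u v = n}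

/-- The anti-codegree: the number of vertices distinct from `u, v` adjacent to neither. -/
noncomputable def acodeg (H : SimpleGraph V) (u v : V) : ℕ :=
  Nat.card {x : V // x ≠ u ∧ x ≠ v ∧ ¬H.Adj u x ∧ ¬H.Adj v x}

/-- The maximum anti-codegree over pairs of distinct vertices. -/
noncomputable def macodeg (H : SimpleGraph V) : ℕ :=
  sSup {n | ∃ u v : V, u ≠ v ∧ acodeg H u v = n}

/-- A matching, as a set of pairwise vertex-disjoint edges. -/
def IsMatchingSet (H : SimpleGraph V) (M : Finset (Sym2 V)) : Prop :=
  (∀ e ∈ M, e ∈ H.edgeSet) ∧ ∀ e ∈ M, ∀ f ∈ M, e ≠ f → ∀ v : V, v ∈ e → v ∉ f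

/-- The matching number: maximum size of a matching. -/
noncomputable def matchingNumber (H : SimpleGraph V) : ℕ :=
  sSup {n | ∃ M : Finset (Sym2 V), IsMatchingSet H M ∧ M.card = n}

/-- The clique cover number: the least `n` such that `V` can be partitioned into `n` cliques. -/
noncomputable def cliqueCoverNumber (H : SimpleGraph V) : ℕ :=
  sInf {n | ∃ c : V → Fin n, ∀ u v : V, c u = c v → u = v ∨ H.Adj u v}

/-- A graph is claw-free if no neighborhood contains three pairwise nonadjacent vertices. -/
def ClawFree (G : SimpleGraph V) : Prop :=
  ∀ v a b c : V, G.Adj v a → G.Adj v b → G.Adj v c →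
    a ≠ b → a ≠ c → b ≠ c → G.Adj a b ∨ G.Adj a c ∨ G.Adj b c

/-- Maximum edge-codegree `Δ_e`: maximum codegree over pairs of adjacent vertices. -/
noncomputable def maxEdgeCodeg (G : SimpleGraph V) : ℕ :=
  sSup {n | ∃ u v : V, G.Adj u v ∧ codeg G u v = n}


lemma codeg_le_card [Finite V] (H : SimpleGraph V) (u v : V) : codeg H u v ≤ Nat.card V :=
  Nat.card_le_card_of_injective (fun x : {x : V // H.Adj u x ∧ H.Adj v x} => x.1)
    (fun a b h => Subtype.ext h)

lemma codeg_le_maxCodeg [Finite V] (H : SimpleGraph V) {u v : V} (h : u ≠ v) :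
    codeg H u v ≤ maxCodeg H := by
  refine le_csSup ⟨Nat.card V, ?_⟩ ⟨u, v, h, rfl⟩
  rintro n ⟨a, b, -, rfl⟩
  exact codeg_le_card H a b

lemma codeg_induce_le [Finite V] (G : SimpleGraph V) (s : Set V) (u v : s) :
    codeg (G.induce s) u v ≤ codeg G u.1 v.1 := by
  refine Nat.card_le_card_of_injective
    (fun z : {z : s // (G.induce s).Adj u z ∧ (G.induce s).Adj v z} =>
      (⟨z.1.1, z.2.1, z.2.2⟩ : {z : V // G.Adj u.1 z ∧ G.Adj v.1 z})) ?_
  intro a b h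
  simp only [Subtype.mk.injEq] at h
  exact Subtype.ext (Subtype.ext h)

lemma maxCodeg_induce_le [Finite V] (G : SimpleGraph V) (s : Set V) :
    maxCodeg (G.induce s) ≤ maxCodeg G := by
  rcases Set.eq_empty_or_nonempty {n | ∃ u v : s, u ≠ v ∧ codeg (G.induce s) u v = n} with h | h
  · unfold maxCodeg
    rw [h, csSup_empty]
    exact Nat.zero_le _
  · refine csSup_le h ?_
    rintro n ⟨u, v, huv, rfl⟩
    exact (codeg_induce_le G s u v).trans
      (codeg_le_maxCodeg G (fun e => huv (Subtype.ext e)))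

/-- In a graph that is vertex-critical for the property
`χ(G) > Δ₂(G) + 3`, no vertex dominates another: there are no distinct `x, y` with
`N(y) ⊆ N[x]`. -/
theorem stmt_13 [Fintype V] (G : SimpleGraph V)
    (hcrit : ((maxCodeg G + 3 : ℕ) : ℕ∞) < G.chromaticNumber)
    (hmin : ∀ s : Set V, s ≠ Set.univ →
      (G.induce s).chromaticNumber ≤ ((maxCodeg (G.induce s) + 3 : ℕ) : ℕ∞)) :
    ¬ ∃ x y : V, x ≠ y ∧ G.neighborSet y ⊆ insert x (G.neighborSet x) := by
  classical
  rintro ⟨x, y, hxy, hdom⟩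
  set n := maxCodeg G + 3 with hn
  set s : Set V := {v | v ≠ y} with hs
  have hsne : s ≠ Set.univ := by
    intro h
    have : y ∈ s := h ▸ Set.mem_univ y
    exact this rfl
  -- a coloring of G - y with n colors
  have hcol : (G.induce s).Colorable n := by
    rw [← chromaticNumber_le_iff_colorable]
    refine (hmin s hsne).trans ?_
    have : maxCodeg (G.induce s) + 3 ≤ n := by
      have := maxCodeg_induce_le G s
      omega
    exact_mod_cast this
  obtain ⟨C⟩ := hcol
  -- degree bound for y
  have hdeg : (G.neighborFinset y).card ≤ maxCodeg G + 1 := by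
    have hsub : G.neighborFinset y ⊆
        insert x (Finset.univ.filter (fun z => G.Adj x z ∧ G.Adj y z)) := by
      intro z hz
      have hzy : G.Adj y z := (G.mem_neighborFinset y z).mp hz
      rcases Set.mem_insert_iff.mp (hdom hzy) with h | h
      · simp [h]
      · exact Finset.mem_insert_of_mem
          (Finset.mem_filter.mpr ⟨Finset.mem_univ _, h, hzy⟩)
    have hc : (Finset.univ.filter (fun z => G.Adj x z ∧ G.Adj y z)).card = codeg G x y := by
      rw [codeg, Nat.card_eq_fintype_card, Fintype.card_subtype]
    calc (G.neighborFinset y).card ≤ _ := Finset.card_le_card hsub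
      _ ≤ (Finset.univ.filter (fun z => G.Adj x z ∧ G.Adj y z)).card + 1 :=
        Finset.card_insert_le _ _
      _ ≤ maxCodeg G + 1 := by
        rw [hc]; exact Nat.add_le_add_right (codeg_le_maxCodeg G hxy) 1
  -- colors used by neighbors of y
  set used : Finset (Fin n) :=
    (G.neighborFinset y).attach.image
      (fun z => C ⟨z.1, ((G.mem_neighborFinset y z.1).mp z.2).ne'⟩) with hused
  have hfree : ∃ c0 : Fin n, c0 ∉ used := by
    have h1 : used.card ≤ maxCodeg G + 1 :=
      (Finset.card_image_le).trans (by simpa using hdeg)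
    have h2 : used.card < Fintype.card (Fin n) := by
      rw [Fintype.card_fin]; omega
    have : (usedᶜ : Finset (Fin n)).Nonempty := by
      rw [← Finset.card_pos, Finset.card_compl]
      omega
    obtain ⟨c0, hc0⟩ := this
    exact ⟨c0, Finset.mem_compl.mp hc0⟩
  obtain ⟨c0, hc0⟩ := hfree
  -- colors of neighbors of y are used
  have key : ∀ w (hw : G.Adj y w), C ⟨w, hw.ne'⟩ ∈ used := by
    intro w hw
    exact Finset.mem_image.mpr ⟨⟨w, (G.mem_neighborFinset y w).mpr hw⟩,
      Finset.mem_attach _ _, rfl⟩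
  -- extend the coloring to all of G
  have hcolG : G.Colorable n := by
    refine ⟨Coloring.mk (fun v => if h : v = y then c0 else C ⟨v, h⟩) ?_⟩
    intro u v huv
    by_cases hu : u = y
    · have hv : v ≠ y := by
        intro e; rw [hu, e] at huv; exact huv.ne rfl
      simp only [dif_pos hu, dif_neg hv]
      intro heq
      exact hc0 (heq ▸ key v (hu ▸ huv))
    · by_cases hv : v = y
      · simp only [dif_neg hu, dif_pos hv]
        intro heq
        exact hc0 (heq.symm ▸ key u (hv ▸ huv.symm))
      · simp only [dif_neg hu, dif_neg hv]
        exact C.valid (by simpa [comap_adj] using huv)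
  have := hcolG.chromaticNumber_le
  exact absurd (lt_of_lt_of_le hcrit this) (lt_irrefl _)
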